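/- Let G be a group with elements a_1, ..., a_{g-1}, u_1, ..., u_{g-1} satisfying the braid relations within each family, a_i u_j = u_j a_i for |i-j|>1, a_i u_{i+1} u_i = u_{i+1} u_i a_{i+1}, a_{i+1} u_i u_{i+1} = u_i u_{i+1} a_i, a_1 u_1 a_1 = u_1, and u_2 a_1 a_2 u_1 = a_1 a_2. Let Δ_k be defined by Δ_1 = 1, Δ_k = (u_1 ⋯ u_{k-1}) Δ_{k-1}. Then for all 2 ≤ k ≤ g and 1 ≤ i ≤ k-1 one has Δ_k a_i = a_{k-i}^{-1} Δ_k. -/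

import Mathlib

/-!
Write `x * y = z * x` as `SemiconjBy x y z`, so that the claim reads `SemiconjBy Δₖ aᵢ aₖ₋ᵢ⁻¹`
and conjugations compose along products. Induct on `k`, with `Δ₂ = u₁` and (C4a) as the base.
For `i < k` use `Δₖ₊₁ = (u₁ ⋯ uₖ) Δₖ`: by (C1) and (C3), `u₁ ⋯ uₖ` conjugates `aⱼ` to `aⱼ₊₁`.
For `i = k` use instead `Δₖ₊₁ = Δₖ (uₖ ⋯ u₁)`, which follows from the far commutation of the `uᵢ`:
by (C1) and (C2), `uₖ ⋯ u₁` conjugates `aₖ` to `aₖ₋₁`, and `Δₖ` conjugates `aₖ₋₁` to `a₁⁻¹`.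
-/

variable {G : Type*} [Group G]

/-- `prodAsc f m = f 1 * f 2 * ⋯ * f m` (empty product for `m = 0`). -/
def prodAsc (f : ℕ → G) (m : ℕ) : G :=
  ((List.range m).map (fun i => f (i + 1))).prod

/-- `prodDesc f m = f m * ⋯ * f 2 * f 1` (empty product for `m = 0`). -/
def prodDesc (f : ℕ → G) (m : ℕ) : G :=
  (((List.range m).reverse).map (fun i => f (i + 1))).prod

/-- The fundamental braid element: `Δ 0 = Δ 1 = 1`, `Δ (m+1) = (u 1 ⋯ u m) * Δ m`. -/
def braidDelta (u : ℕ → G) : ℕ → G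
  | 0 => 1
  | m + 1 => prodAsc u m * braidDelta u m

lemma prodAsc_succ (f : ℕ → G) (m : ℕ) : prodAsc f (m + 1) = prodAsc f m * f (m + 1) := by
  simp [prodAsc, List.range_succ]

lemma prodDesc_succ (f : ℕ → G) (m : ℕ) : prodDesc f (m + 1) = f (m + 1) * prodDesc f m := by
  simp [prodDesc, List.range_succ]

lemma Commute.prodAsc_right {x : G} {f : ℕ → G} {m : ℕ}
    (h : ∀ j, 1 ≤ j → j ≤ m → Commute x (f j)) : Commute x (prodAsc f m) := by
  refine Commute.list_prod_right _ _ fun y hy => ?_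
  obtain ⟨j, hj, rfl⟩ := List.mem_map.1 hy
  exact h (j + 1) (by omega) (by simpa using hj)

lemma Commute.prodDesc_right {x : G} {f : ℕ → G} {m : ℕ}
    (h : ∀ j, 1 ≤ j → j ≤ m → Commute x (f j)) : Commute x (prodDesc f m) := by
  refine Commute.list_prod_right _ _ fun y hy => ?_
  obtain ⟨j, hj, rfl⟩ := List.mem_map.1 hy
  exact h (j + 1) (by omega) (by simpa using hj)

lemma Commute.braidDelta_right {x : G} {u : ℕ → G} {m : ℕ}
    (h : ∀ j, 1 ≤ j → j < m → Commute x (u j)) : Commute x (braidDelta u m) := by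
  induction m with
  | zero => exact Commute.one_right x
  | succ m ih =>
    exact (Commute.prodAsc_right fun j hj hjm => h j hj (by omega)).mul_right
      (ih fun j hj hjm => h j hj (by omega))

lemma braidDelta_succ_eq_mul_prodDesc {g : ℕ} {u : ℕ → G}
    (hu1 : ∀ i j, 1 ≤ i → i + 2 ≤ j → j ≤ g - 1 → u i * u j = u j * u i)
    {m : ℕ} (hm : m ≤ g - 1) : braidDelta u (m + 1) = braidDelta u m * prodDesc u m := by
  induction m with
  | zero => simp [braidDelta, prodAsc, prodDesc]
  | succ m ih =>
    have hcomm : Commute (u (m + 1)) (braidDelta u m) :=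
      Commute.braidDelta_right fun j hj hjm => (hu1 j (m + 1) hj (by omega) hm).symm
    calc braidDelta u (m + 1 + 1)
        = prodAsc u m * u (m + 1) * (braidDelta u m * prodDesc u m) := by
          rw [braidDelta, prodAsc_succ, ih (by omega)]
      _ = prodAsc u m * braidDelta u m * (u (m + 1) * prodDesc u m) := by
          rw [mul_assoc, ← mul_assoc (u (m + 1)), hcomm.eq]
          group
      _ = braidDelta u (m + 1) * prodDesc u (m + 1) := by rw [braidDelta, prodDesc_succ]

lemma semiconjBy_prodAsc {g : ℕ} {a u : ℕ → G}
    (hC1 : ∀ i j, 1 ≤ i → i ≤ g - 1 → 1 ≤ j → j ≤ g - 1 → (i + 2 ≤ j ∨ j + 2 ≤ i) →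
      a i * u j = u j * a i)
    (hC3 : ∀ i, 1 ≤ i → i ≤ g - 2 → a (i + 1) * u i * u (i + 1) = u i * u (i + 1) * a i)
    {i k : ℕ} (hi : 1 ≤ i) (hik : i < k) (hkg : k ≤ g - 1) :
    SemiconjBy (prodAsc u k) (a i) (a (i + 1)) := by
  induction k, hik using Nat.le_induction with
  | base =>
    obtain ⟨j, rfl⟩ : ∃ j, i = j + 1 := ⟨i - 1, by omega⟩
    have hshift : SemiconjBy (u (j + 1) * u (j + 2)) (a (j + 1)) (a (j + 2)) := by
      simp only [SemiconjBy, mul_assoc] at hC3 ⊢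
      exact (hC3 (j + 1) (by omega) (by omega)).symm
    have hcomm : Commute (prodAsc u j) (a (j + 2)) :=
      (Commute.prodAsc_right fun l hl hlj =>
        hC1 (j + 2) l (by omega) (by omega) hl (by omega) (Or.inr (by omega))).symm
    rw [prodAsc_succ, prodAsc_succ, mul_assoc]
    exact SemiconjBy.mul_left hcomm hshift
  | succ k hik ih =>
    rw [prodAsc_succ]
    exact (ih (by omega)).mul_left
      (Commute.symm (hC1 i (k + 1) hi (by omega) (by omega) hkg (Or.inl (by omega))))

lemma semiconjBy_prodDesc {g : ℕ} {a u : ℕ → G}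
    (hC1 : ∀ i j, 1 ≤ i → i ≤ g - 1 → 1 ≤ j → j ≤ g - 1 → (i + 2 ≤ j ∨ j + 2 ≤ i) →
      a i * u j = u j * a i)
    (hC2 : ∀ i, 1 ≤ i → i ≤ g - 2 → a i * u (i + 1) * u i = u (i + 1) * u i * a (i + 1))
    {k : ℕ} (hk : 2 ≤ k) (hkg : k ≤ g - 1) :
    SemiconjBy (prodDesc u k) (a k) (a (k - 1)) := by
  obtain ⟨n, rfl⟩ : ∃ n, k = n + 2 := ⟨k - 2, by omega⟩
  have hshift : SemiconjBy (u (n + 2) * u (n + 1)) (a (n + 2)) (a (n + 1)) := by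
    simp only [SemiconjBy, mul_assoc] at hC2 ⊢
    exact (hC2 (n + 1) (by omega) (by omega)).symm
  have hcomm : Commute (prodDesc u n) (a (n + 2)) :=
    (Commute.prodDesc_right fun l hl hln =>
      hC1 (n + 2) l (by omega) (by omega) hl (by omega) (Or.inr (by omega))).symm
  rw [prodDesc_succ, prodDesc_succ, ← mul_assoc]
  exact hshift.mul_left hcomm

lemma semiconjBy_braidDelta_two {a u : ℕ → G} (hC4 : a 1 * u 1 * a 1 = u 1) :
    SemiconjBy (braidDelta u 2) (a 1) (a 1)⁻¹ := by
  have hΔ : braidDelta u 2 = u 1 := by simp [braidDelta, prodAsc]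
  rw [hΔ, SemiconjBy, eq_inv_mul_iff_mul_eq, ← mul_assoc, hC4]

lemma semiconjBy_braidDelta_succ {g k : ℕ} {a u : ℕ → G}
    (hu1 : ∀ i j, 1 ≤ i → i + 2 ≤ j → j ≤ g - 1 → u i * u j = u j * u i)
    (hC1 : ∀ i j, 1 ≤ i → i ≤ g - 1 → 1 ≤ j → j ≤ g - 1 → (i + 2 ≤ j ∨ j + 2 ≤ i) →
      a i * u j = u j * a i)
    (hC2 : ∀ i, 1 ≤ i → i ≤ g - 2 → a i * u (i + 1) * u i = u (i + 1) * u i * a (i + 1))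
    (hC3 : ∀ i, 1 ≤ i → i ≤ g - 2 → a (i + 1) * u i * u (i + 1) = u i * u (i + 1) * a i)
    (hk : 2 ≤ k) (hkg : k ≤ g - 1)
    (ih : ∀ i, 1 ≤ i → i < k → SemiconjBy (braidDelta u k) (a i) (a (k - i))⁻¹)
    {i : ℕ} (hi : 1 ≤ i) (hik : i ≤ k) :
    SemiconjBy (braidDelta u (k + 1)) (a i) (a (k + 1 - i))⁻¹ := by
  rcases hik.lt_or_eq with hik | rfl
  · rw [braidDelta, show k + 1 - i = k - i + 1 by omega]
    exact (semiconjBy_prodAsc hC1 hC3 (by omega) (by omega) hkg).inv_right.mul_left (ih i hi hik)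
  · have hprev := ih (i - 1) (by omega) (by omega)
    rw [show i - (i - 1) = 1 by omega] at hprev
    rw [braidDelta_succ_eq_mul_prodDesc hu1 hkg, Nat.add_sub_cancel_left]
    exact hprev.mul_left (semiconjBy_prodDesc hC1 hC2 hk hkg)

theorem rel_E1_general (g : ℕ) (a u : ℕ → G)
    (hu1 : ∀ i j, 1 ≤ i → i + 2 ≤ j → j ≤ g - 1 → u i * u j = u j * u i)
    (hC1 : ∀ i j, 1 ≤ i → i ≤ g - 1 → 1 ≤ j → j ≤ g - 1 → (i + 2 ≤ j ∨ j + 2 ≤ i) →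
      a i * u j = u j * a i)
    (hC2 : ∀ i, 1 ≤ i → i ≤ g - 2 → a i * u (i + 1) * u i = u (i + 1) * u i * a (i + 1))
    (hC3 : ∀ i, 1 ≤ i → i ≤ g - 2 → a (i + 1) * u i * u (i + 1) = u i * u (i + 1) * a i)
    (hC4 : a 1 * u 1 * a 1 = u 1)
    :
    ∀ k i, 2 ≤ k → k ≤ g → 1 ≤ i → i ≤ k - 1 →
      braidDelta u k * a i = (a (k - i))⁻¹ * braidDelta u k := by
  intro k i hk
  induction k, hk using Nat.le_induction generalizing i with
  | base =>
    intro _ hi hik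
    obtain rfl : i = 1 := by omega
    exact semiconjBy_braidDelta_two hC4
  | succ k hk ih =>
    intro hkg hi hik
    exact semiconjBy_braidDelta_succ hu1 hC1 hC2 hC3 hk (by omega)
      (fun j hj hjk => ih j (by omega) hj (by omega)) hi (by omega)

/-- relation (E1): Δ_k a_i = a_{k-i}⁻¹ Δ_k for 2 ≤ k ≤ g, 1 ≤ i ≤ k-1. -/
theorem rel_E1 (g : ℕ) (a u : ℕ → G)
    (ha1 : ∀ i j, 1 ≤ i → i + 2 ≤ j → j ≤ g - 1 → a i * a j = a j * a i)
    (ha2 : ∀ i, 1 ≤ i → i + 1 ≤ g - 1 → a i * a (i + 1) * a i = a (i + 1) * a i * a (i + 1))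
    (hu1 : ∀ i j, 1 ≤ i → i + 2 ≤ j → j ≤ g - 1 → u i * u j = u j * u i)
    (hu2 : ∀ i, 1 ≤ i → i + 1 ≤ g - 1 → u i * u (i + 1) * u i = u (i + 1) * u i * u (i + 1))
    (hC1 : ∀ i j, 1 ≤ i → i ≤ g - 1 → 1 ≤ j → j ≤ g - 1 → (i + 2 ≤ j ∨ j + 2 ≤ i) →
      a i * u j = u j * a i)
    (hC2 : ∀ i, 1 ≤ i → i ≤ g - 2 → a i * u (i + 1) * u i = u (i + 1) * u i * a (i + 1))
    (hC3 : ∀ i, 1 ≤ i → i ≤ g - 2 → a (i + 1) * u i * u (i + 1) = u i * u (i + 1) * a i)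
    (hC4 : a 1 * u 1 * a 1 = u 1)
    (hC5 : u 2 * a 1 * a 2 * u 1 = a 1 * a 2)
    :
    ∀ k i, 2 ≤ k → k ≤ g → 1 ≤ i → i ≤ k - 1 →
      braidDelta u k * a i = (a (k - i))⁻¹ * braidDelta u k :=
  rel_E1_general g a u hu1 hC1 hC2 hC3 hC4
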